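/- Let n, m ≥ 2 and let F : ℝ₊ⁿ → Sₘ be continuously differentiable, convex and monotonically non-increasing. Let x ∈ ℝ₊ⁿ be such that F'(x)((n−1)e_j' − e_j) ⋠ 0 for all j ∈ {1,…,n}, and set λ := min over j ∈ {1,…,n} of λ_max(F'(x)((n−1)e_j' − e_j)). Then for every y ∈ ℝ₊ⁿ: if λ_max(F(y) − F(x)) < λ‖y − x‖∞/(n−1), then Σ_{j=1}ⁿ (y_j − x_j) > 0. -/

import Mathlib

/-!
Suppose `∑ (y - x) ≤ 0`, let `h = y - x`, let `h j` be its smallest entry and `s = -h j`.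
Every other entry satisfies `h k ≤ (n - 1) s` (the remaining `n - 1` entries sum to at least
`(n - 1) h j`), so `s ((n - 1) e_j' - e_j) - h ≥ 0` and `‖h‖∞ ≤ (n - 1) s`. Monotonicity and
convexity then give `s F'(x) d_j ⪯ F'(x) h ⪯ F(y) - F(x)` with `d_j = (n - 1) e_j' - e_j`, and
`λ_max` is monotone for `⪯`, so
`s λ ≤ s λ_max(F'(x) d_j) ≤ λ_max(F(y) - F(x)) < λ ‖h‖∞ / (n - 1) ≤ λ s`,
which is absurd. Here `λ > 0` because no `F'(x) d_j` is negative semidefinite.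
-/

attribute [local instance] Matrix.frobeniusNormedAddCommGroup Matrix.frobeniusNormedSpace

noncomputable section

/-- The open positive orthant `ℝ₊ⁿ` in `ℝⁿ`. -/
def posOrth (n : ℕ) : Set (Fin n → ℝ) := {x | ∀ i, 0 < x i}

/-- The Loewner order on real matrices: `A ⪯ B` iff `B - A` is positive semidefinite. -/
def loewnerLE {m : ℕ} (A B : Matrix (Fin m) (Fin m) ℝ) : Prop := (B - A).PosSemidef

/-- The largest eigenvalue `λ_max` of a real (symmetric) matrix. -/
noncomputable def lambdaMax {m : ℕ} (A : Matrix (Fin m) (Fin m) ℝ) : ℝ :=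
  sSup {r : ℝ | ∃ v : Fin m → ℝ, v ≠ 0 ∧ A.mulVec v = r • v}

/-- The spectral norm `‖·‖₂` of a real matrix (operator norm on Euclidean space). -/
noncomputable def matSpectralNorm {m : ℕ} (A : Matrix (Fin m) (Fin m) ℝ) : ℝ :=
  ‖LinearMap.toContinuousLinearMap (Matrix.toEuclideanLin A)‖

/-- `e_j`, the `j`-th standard unit vector of `ℝⁿ`. -/
def unitVec (n : ℕ) (j : Fin n) : Fin n → ℝ := Pi.single j 1

/-- `e_j' = 𝟙 - e_j`. -/
def coVec (n : ℕ) (j : Fin n) : Fin n → ℝ := (fun _ => (1:ℝ)) - Pi.single j 1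

/-- The direction `(n-1) e_j' - e_j`. -/
noncomputable def dirVec (n : ℕ) (j : Fin n) : Fin n → ℝ :=
  ((n:ℝ) - 1) • coVec n j - unitVec n j

/-- `z_{j,k} = (a/2) e_j' + (a + k·a/(4(n-1))) e_j`. -/
noncomputable def zVec (n : ℕ) (a : ℝ) (j : Fin n) (k : ℤ) : Fin n → ℝ :=
  (a/2) • coVec n j + (a + (k:ℝ) * a / (4 * ((n:ℝ) - 1))) • unitVec n j

/-- `d_j = ((2b-a)/a)(n-1) e_j' - (1/2) e_j`. -/
noncomputable def dVec (n : ℕ) (a b : ℝ) (j : Fin n) : Fin n → ℝ :=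
  ((2*b - a)/a * ((n:ℝ) - 1)) • coVec n j - (1/2 : ℝ) • unitVec n j

/-- `K = ⌈4(n-1)b/a⌉ - 4n - 3`. -/
noncomputable def Kbound (n : ℕ) (a b : ℝ) : ℤ := ⌈4 * ((n:ℝ) - 1) * b / a⌉ - 4 * (n:ℤ) - 3

open Matrix Unitary Finset
open scoped ComplexOrder

theorem Matrix.IsHermitian.posSemidef_smul_one_sub {𝕜 n : Type*} [RCLike 𝕜] [Fintype n]
    [DecidableEq n] {A : Matrix n n 𝕜} (hA : A.IsHermitian) {μ : ℝ}
    (hμ : ∀ i, hA.eigenvalues i ≤ μ) : (μ • 1 - A).PosSemidef := by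
  have hD : diagonal (RCLike.ofReal ∘ fun i => μ - hA.eigenvalues i)
      = μ • (1 : Matrix n n 𝕜) - diagonal (RCLike.ofReal ∘ hA.eigenvalues) := by
    ext i k
    by_cases h : i = k <;> simp [h, RCLike.real_smul_eq_coe_mul]
  have hdiag : μ • 1 - A = (hA.eigenvectorUnitary : Matrix n n 𝕜) *
      diagonal (RCLike.ofReal ∘ fun i => μ - hA.eigenvalues i) *
        star (hA.eigenvectorUnitary : Matrix n n 𝕜) := by
    conv_lhs => rw [hA.spectral_theorem, conjStarAlgAut_apply]
    rw [hD, mul_sub, sub_mul, mul_smul_comm, mul_one, smul_mul_assoc,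
      Unitary.mul_star_self_of_mem hA.eigenvectorUnitary.2]
  rw [hdiag]
  exact (posSemidef_diagonal_iff.mpr fun i => by simpa using hμ i).mul_mul_conjTranspose_same _

theorem Matrix.IsHermitian.dotProduct_mulVec_le_of_eigenvalues_le {n : Type*} [Fintype n]
    [DecidableEq n] {A : Matrix n n ℝ} (hA : A.IsHermitian) {μ : ℝ}
    (hμ : ∀ i, hA.eigenvalues i ≤ μ) (v : n → ℝ) : v ⬝ᵥ A *ᵥ v ≤ μ * (v ⬝ᵥ v) := by
  have := (hA.posSemidef_smul_one_sub hμ).dotProduct_mulVec_nonneg v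
  simp only [star_trivial, sub_mulVec, smul_mulVec, one_mulVec, dotProduct_sub,
    dotProduct_smul, smul_eq_mul] at this
  linarith

theorem Matrix.IsHermitian.eigenvectorBasis_ne_zero {𝕜 n : Type*} [RCLike 𝕜] [Fintype n]
    [DecidableEq n] {A : Matrix n n 𝕜} (hA : A.IsHermitian) (i : n) :
    ⇑(hA.eigenvectorBasis i) ≠ 0 := fun h0 =>
  hA.eigenvectorBasis.orthonormal.ne_zero i (by ext k; exact congrFun h0 k)

section lambdaMax

variable {m : ℕ} {A B : Matrix (Fin m) (Fin m) ℝ}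

theorem lambdaMax_eq_sup'_eigenvalues [Nonempty (Fin m)] (hA : A.IsHermitian) :
    lambdaMax A = univ.sup' univ_nonempty hA.eigenvalues := by
  refine IsGreatest.csSup_eq ⟨?_, ?_⟩
  · obtain ⟨i, -, hi⟩ := exists_mem_eq_sup' univ_nonempty hA.eigenvalues
    exact ⟨_, hA.eigenvectorBasis_ne_zero i, hi ▸ hA.mulVec_eigenvectorBasis i⟩
  · rintro r ⟨v, hv, hAv⟩
    have := hA.dotProduct_mulVec_le_of_eigenvalues_le
      (μ := univ.sup' univ_nonempty hA.eigenvalues) (fun i => le_sup' _ (mem_univ i)) v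
    rw [hAv, dotProduct_smul, smul_eq_mul] at this
    exact le_of_mul_le_mul_right this (by simpa using dotProduct_star_self_pos_iff.mpr hv)

theorem exists_mulVec_eq_lambdaMax_smul [Nonempty (Fin m)] (hA : A.IsHermitian) :
    ∃ v ≠ 0, A *ᵥ v = lambdaMax A • v := by
  obtain ⟨i, -, hi⟩ := exists_mem_eq_sup' univ_nonempty hA.eigenvalues
  refine ⟨_, hA.eigenvectorBasis_ne_zero i, ?_⟩
  rw [lambdaMax_eq_sup'_eigenvalues hA, hi, hA.mulVec_eigenvectorBasis]

theorem lambdaMax_of_isEmpty [IsEmpty (Fin m)] (A : Matrix (Fin m) (Fin m) ℝ) :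
    lambdaMax A = 0 := by
  simp [lambdaMax, Subsingleton.elim _ (0 : Fin m → ℝ)]

theorem dotProduct_mulVec_le_lambdaMax_mul (hA : A.IsHermitian) (v : Fin m → ℝ) :
    v ⬝ᵥ A *ᵥ v ≤ lambdaMax A * (v ⬝ᵥ v) := by
  cases isEmpty_or_nonempty (Fin m)
  · simp [Subsingleton.elim v 0]
  rw [lambdaMax_eq_sup'_eigenvalues hA]
  exact hA.dotProduct_mulVec_le_of_eigenvalues_le (fun i => le_sup' _ (mem_univ i)) v

theorem le_lambdaMax_of_mulVec_eq_smul (hA : A.IsHermitian) {r : ℝ} {v : Fin m → ℝ}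
    (hv : v ≠ 0) (hAv : A *ᵥ v = r • v) : r ≤ lambdaMax A := by
  have := dotProduct_mulVec_le_lambdaMax_mul hA v
  rw [hAv, dotProduct_smul, smul_eq_mul] at this
  exact le_of_mul_le_mul_right this (by simpa using dotProduct_star_self_pos_iff.mpr hv)

theorem loewnerLE.trans {C : Matrix (Fin m) (Fin m) ℝ} (hAB : loewnerLE A B)
    (hBC : loewnerLE B C) : loewnerLE A C := by
  simpa [loewnerLE] using hBC.add hAB

theorem loewnerLE.dotProduct_mulVec_le (h : loewnerLE A B) (v : Fin m → ℝ) :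
    v ⬝ᵥ A *ᵥ v ≤ v ⬝ᵥ B *ᵥ v := by
  have := h.dotProduct_mulVec_nonneg v
  simp only [star_trivial, sub_mulVec, dotProduct_sub] at this
  linarith

theorem loewnerLE_of_sub_loewnerLE_zero (h : loewnerLE (A - B) 0) : loewnerLE A B := by
  simpa [loewnerLE] using h

theorem lambdaMax_mono (hA : A.IsHermitian) (h : loewnerLE A B) : lambdaMax A ≤ lambdaMax B := by
  cases isEmpty_or_nonempty (Fin m)
  · simp [lambdaMax_of_isEmpty]
  obtain ⟨v, hv, hAv⟩ := exists_mulVec_eq_lambdaMax_smul hA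
  have hB : B.IsHermitian := by simpa using h.isHermitian.add hA
  have := (h.dotProduct_mulVec_le v).trans (dotProduct_mulVec_le_lambdaMax_mul hB v)
  rw [hAv, dotProduct_smul, smul_eq_mul] at this
  exact le_of_mul_le_mul_right this (by simpa using dotProduct_star_self_pos_iff.mpr hv)

theorem mul_lambdaMax_le_lambdaMax_smul (hA : A.IsHermitian) (c : ℝ) :
    c * lambdaMax A ≤ lambdaMax (c • A) := by
  cases isEmpty_or_nonempty (Fin m)
  · simp [lambdaMax_of_isEmpty]
  obtain ⟨v, hv, hAv⟩ := exists_mulVec_eq_lambdaMax_smul hA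
  refine le_lambdaMax_of_mulVec_eq_smul (hA.smul (IsSelfAdjoint.all c)) hv ?_
  rw [smul_mulVec, hAv, smul_smul]

theorem lambdaMax_pos_of_not_loewnerLE_zero (hA : A.IsHermitian) (h : ¬ loewnerLE A 0) :
    0 < lambdaMax A := by
  contrapose! h
  refine PosSemidef.of_dotProduct_mulVec_nonneg (by simpa using hA.neg) fun v => ?_
  have hq := dotProduct_mulVec_le_lambdaMax_mul hA v
  have hvv : 0 ≤ v ⬝ᵥ v := by simpa using dotProduct_star_self_nonneg v
  simp only [star_trivial, zero_sub, neg_mulVec, dotProduct_neg]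
  nlinarith

end lambdaMax

section SumNonpos

variable {ι : Type*} [Fintype ι] {h : ι → ℝ} {j : ι}

theorem le_card_sub_one_mul_of_sum_nonpos (hsum : ∑ i, h i ≤ 0) (hmin : ∀ i, h j ≤ h i)
    (k : ι) : h k ≤ ((Fintype.card ι : ℝ) - 1) * -h j := by
  classical
  have hsplit := add_sum_erase univ h (mem_univ k)
  have hrest : (#(univ.erase k) : ℝ) * h j ≤ ∑ i ∈ univ.erase k, h i := by
    simpa using card_nsmul_le_sum (univ.erase k) h (h j) fun i _ => hmin i
  rw [card_erase_of_mem (mem_univ k), card_univ,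
    Nat.cast_sub (Fintype.card_pos_iff.mpr ⟨k⟩), Nat.cast_one] at hrest
  linarith

theorem norm_le_card_sub_one_mul_of_sum_nonpos (hcard : 2 ≤ Fintype.card ι)
    (hsum : ∑ i, h i ≤ 0) (hmin : ∀ i, h j ≤ h i) :
    ‖h‖ ≤ ((Fintype.card ι : ℝ) - 1) * -h j := by
  have hcard' : (2 : ℝ) ≤ Fintype.card ι := by exact_mod_cast hcard
  have hj := le_card_sub_one_mul_of_sum_nonpos hsum hmin j
  refine (pi_norm_le_iff_of_nonneg (by nlinarith)).mpr fun k => abs_le.mpr ⟨?_, ?_⟩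
  · nlinarith [hmin k]
  · exact le_card_sub_one_mul_of_sum_nonpos hsum hmin k

end SumNonpos

theorem dirVec_apply {n : ℕ} (j k : Fin n) :
    dirVec n j k = if k = j then -1 else (n : ℝ) - 1 := by
  by_cases h : k = j <;> simp [dirVec, coVec, unitVec, h]

theorem dirVec_smul_sub_nonneg {n : ℕ} {h : Fin n → ℝ} {j : Fin n} (hsum : ∑ i, h i ≤ 0)
    (hmin : ∀ i, h j ≤ h i) : 0 ≤ (-h j) • dirVec n j - h := by
  intro k
  have := le_card_sub_one_mul_of_sum_nonpos hsum hmin k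
  rw [Fintype.card_fin] at this
  by_cases hk : k = j
  · simp [dirVec_apply, hk]
  · simp only [Pi.zero_apply, Pi.sub_apply, Pi.smul_apply, smul_eq_mul, dirVec_apply, if_neg hk]
    linarith

theorem sum_diff_pos_of_lambdaMax_lt_general {n m : ℕ} (hn : 2 ≤ n)
    (F : (Fin n → ℝ) → Matrix (Fin m) (Fin m) ℝ)
    (F' : (Fin n → ℝ) → (Fin n → ℝ) →L[ℝ] Matrix (Fin m) (Fin m) ℝ)
    (hF'_symm : ∀ x ∈ posOrth n, ∀ d : Fin n → ℝ, (F' x d).IsSymm)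
    (hmono : ∀ x ∈ posOrth n, ∀ d : Fin n → ℝ, 0 ≤ d → loewnerLE (F' x d) 0)
    (hconv : ∀ x ∈ posOrth n, ∀ x₀ ∈ posOrth n, loewnerLE (F' x₀ (x - x₀)) (F x - F x₀))
    (x : Fin n → ℝ) (hx : x ∈ posOrth n)
    (hcrit : ∀ j : Fin n, ¬ loewnerLE (F' x (dirVec n j)) 0)
    (lam : ℝ) (hlam : IsLeast {r : ℝ | ∃ j : Fin n, r = lambdaMax (F' x (dirVec n j))} lam) :
    ∀ y ∈ posOrth n, lambdaMax (F y - F x) < lam * ‖y - x‖ / ((n:ℝ) - 1) →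
      0 < ∑ j, (y j - x j) := by
  intro y hy hlt
  by_contra! hsum
  have hn1 : (0 : ℝ) < n - 1 := sub_pos.mpr (by exact_mod_cast hn)
  have hherm (d : Fin n → ℝ) : (F' x d).IsHermitian := by simpa using hF'_symm x hx d
  have hlam_pos : 0 < lam := by
    obtain ⟨j₀, rfl⟩ := hlam.1
    exact lambdaMax_pos_of_not_loewnerLE_zero (hherm _) (hcrit j₀)
  set h := y - x
  replace hsum : ∑ i, h i ≤ 0 := hsum
  obtain ⟨j, -, hmin⟩ := exists_min_image univ h ⟨⟨0, by omega⟩, mem_univ _⟩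
  replace hmin : ∀ i, h j ≤ h i := fun i => hmin i (mem_univ i)
  set M := F' x (dirVec n j)
  set s := -h j
  have hnorm : ‖h‖ ≤ ((n : ℝ) - 1) * s := by
    simpa only [Fintype.card_fin] using
      norm_le_card_sub_one_mul_of_sum_nonpos (by simpa using hn) hsum hmin
  have hs : 0 ≤ s := by nlinarith [norm_nonneg h]
  have hle : loewnerLE (s • M) (F y - F x) := by
    refine (loewnerLE_of_sub_loewnerLE_zero ?_).trans (hconv y hy x hx)
    rw [← map_smul, ← map_sub]
    exact hmono x hx _ (dirVec_smul_sub_nonneg hsum hmin)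
  refine lt_irrefl (s * lam) ?_
  calc s * lam
      ≤ s * lambdaMax M := mul_le_mul_of_nonneg_left (hlam.2 ⟨j, rfl⟩) hs
    _ ≤ lambdaMax (s • M) := mul_lambdaMax_le_lambdaMax_smul (hherm _) _
    _ ≤ lambdaMax (F y - F x) := lambdaMax_mono ((hherm _).smul (IsSelfAdjoint.all _)) hle
    _ < lam * ‖h‖ / ((n : ℝ) - 1) := hlt
    _ ≤ s * lam := by rw [div_le_iff₀ hn1]; nlinarith

/-- Lemma 2, (9). If `F'(x)((n-1)e_j' - e_j) ⋠ 0` for all `j` and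
`λ := min_j λ_max(F'(x)((n-1)e_j' - e_j))`, then for `y ∈ ℝ₊ⁿ`,
`λ_max(F(y) - F(x)) < λ‖y - x‖_∞/(n-1)` implies `∑ (y_j - x_j) > 0`. -/
theorem sum_diff_pos_of_lambdaMax_lt {n m : ℕ} (hn : 2 ≤ n) (hm : 2 ≤ m)
    (F : (Fin n → ℝ) → Matrix (Fin m) (Fin m) ℝ)
    (F' : (Fin n → ℝ) → (Fin n → ℝ) →L[ℝ] Matrix (Fin m) (Fin m) ℝ)
    (hF_symm : ∀ x ∈ posOrth n, (F x).IsSymm)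
    (hF'_symm : ∀ x ∈ posOrth n, ∀ d : Fin n → ℝ, (F' x d).IsSymm)
    (hderiv : ∀ x ∈ posOrth n, HasFDerivAt F (F' x) x)
    (hcont : ContinuousOn F' (posOrth n))
    (hmono : ∀ x ∈ posOrth n, ∀ d : Fin n → ℝ, 0 ≤ d → loewnerLE (F' x d) 0)
    (hconv : ∀ x ∈ posOrth n, ∀ x₀ ∈ posOrth n, loewnerLE (F' x₀ (x - x₀)) (F x - F x₀))
    (x : Fin n → ℝ) (hx : x ∈ posOrth n)
    (hcrit : ∀ j : Fin n, ¬ loewnerLE (F' x (dirVec n j)) 0)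
    (lam : ℝ) (hlam : IsLeast {r : ℝ | ∃ j : Fin n, r = lambdaMax (F' x (dirVec n j))} lam) :
    ∀ y ∈ posOrth n, lambdaMax (F y - F x) < lam * ‖y - x‖ / ((n:ℝ) - 1) →
      0 < ∑ j, (y j - x j) :=
  sum_diff_pos_of_lambdaMax_lt_general hn F F' hF'_symm hmono hconv x hx hcrit lam hlam

end
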